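/- Let R_n = Γ(n/2 + 1)^{1/n} / √π. Then (n - 1) / (2 R_n²) → π e as n → ∞. -/

import Mathlib

open Real Filter

/-- The radius of the `n`-dimensional Euclidean ball of unit volume. -/
noncomputable def unitBallRadius (n : ℕ) : ℝ :=
  (Real.Gamma ((n : ℝ) / 2 + 1)) ^ ((1 : ℝ) / n) / Real.sqrt π

open Topology
open scoped Nat

/-!
Stirling's formula gives `log m! = m log m - m + o(m)`. Since `Γ` is increasing on `[2, ∞)`,
`Γ(x + 1)` lies between `⌊x⌋!` and `⌈x⌉!`, so also `log Γ(x + 1) = x log x - x + o(x)`, that is,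
`Γ(x + 1) ^ (1 / x) / x → e⁻¹`. For `x = n / 2` we have `R_n² = Γ(x + 1) ^ (1 / x) / π`, hence
`(n - 1) / (2 R_n²) = π ((n - 1) / n) (x / Γ(x + 1) ^ (1 / x)) → π e`.
-/

lemma tendsto_log_factorial_div_sub_log :
    Tendsto (fun m : ℕ => log m ! / m - log m) atTop (𝓝 (-1)) := by
  have hstirling : Tendsto (fun m : ℕ => log (Stirling.stirlingSeq m) / m) atTop (𝓝 0) :=
    (Stirling.tendsto_stirlingSeq_sqrt_pi.log (by positivity)).div_atTop
      tendsto_natCast_atTop_atTop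
  have hlog : Tendsto (fun m : ℕ => log (2 * m) / (2 * m)) atTop (𝓝 0) := by
    have := tendsto_pow_log_div_mul_add_atTop 1 0 1 one_ne_zero
    simp only [pow_one, one_mul, add_zero] at this
    exact this.comp (tendsto_natCast_atTop_atTop.const_mul_atTop two_pos)
  have := (hstirling.add hlog).sub_const 1
  rw [add_zero, zero_sub] at this
  refine this.congr' ?_
  filter_upwards [eventually_ne_atTop 0] with m hm
  have hm' : (m : ℝ) ≠ 0 := Nat.cast_ne_zero.mpr hm
  rw [Stirling.log_stirlingSeq_formula, log_div hm' (exp_ne_zero 1), log_exp]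
  field_simp
  ring

lemma tendsto_div_self_of_abs_sub_le {y : ℝ → ℝ} {C : ℝ}
    (hy : ∀ᶠ x in atTop, |y x - x| ≤ C) :
    Tendsto (fun x => y x / x) atTop (𝓝 1) := by
  have hsmall : Tendsto (fun x => (y x - x) / x) atTop (𝓝 0) := by
    refine squeeze_zero_norm' ?_ ((tendsto_const_nhds (x := C)).div_atTop tendsto_id)
    filter_upwards [hy, eventually_gt_atTop 0] with x hx hx0
    rw [norm_div, Real.norm_eq_abs, Real.norm_of_nonneg hx0.le]
    exact div_le_div_of_nonneg_right hx hx0.le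
  have := hsmall.const_add 1
  rw [add_zero] at this
  refine this.congr' ?_
  filter_upwards [eventually_ne_atTop 0] with x hx
  field_simp
  ring

lemma tendsto_log_factorial_div_sub_log_of_abs_sub_le {k : ℝ → ℕ}
    (hk : ∀ᶠ x in atTop, |(k x : ℝ) - x| ≤ 1) :
    Tendsto (fun x => log (k x)! / x - log x) atTop (𝓝 (-1)) := by
  have hratio := tendsto_div_self_of_abs_sub_le hk
  have hk_atTop : Tendsto k atTop atTop := by
    refine tendsto_natCast_atTop_iff.mp <|
      tendsto_atTop_mono' atTop ?_ (tendsto_atTop_add_const_right atTop (-1) tendsto_id)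
    filter_upwards [hk] with x hx
    linarith [(abs_le.mp hx).1, show id x = x from rfl]
  have hlog : Tendsto (fun x : ℝ => log x / x) atTop (𝓝 0) := by
    simpa using tendsto_pow_log_div_mul_add_atTop 1 0 1 one_ne_zero
  have hdiff : Tendsto (fun x => (k x - x) * (log x / x)) atTop (𝓝 0) := by
    refine squeeze_zero_norm' (a := fun x => ‖log x / x‖) ?_ (by simpa using hlog.norm)
    filter_upwards [hk] with x hx
    rw [norm_mul, Real.norm_eq_abs ((k x : ℝ) - x)]
    exact mul_le_of_le_one_left (norm_nonneg _) hx
  -- `log k! / x - log x = (k / x) (log k! / k - log k) + (k / x) log (k / x) + (k - x) (log x / x)`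
  have := (hratio.mul (tendsto_log_factorial_div_sub_log.comp hk_atTop)).add
    ((hratio.mul (hratio.log one_ne_zero)).add hdiff)
  rw [log_one, mul_zero, zero_add, add_zero, one_mul] at this
  refine this.congr' ?_
  filter_upwards [eventually_gt_atTop 0, hk_atTop.eventually_ne_atTop 0] with x hx hkx
  have hkx' : (k x : ℝ) ≠ 0 := Nat.cast_ne_zero.mpr hkx
  simp only [Function.comp_apply]
  rw [log_div hkx' hx.ne']
  field_simp
  ring

lemma factorial_floor_le_Gamma_add_one {x : ℝ} (hx : 1 ≤ x) :
    (⌊x⌋₊ ! : ℝ) ≤ Gamma (x + 1) := by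
  have hfloor : (1 : ℝ) ≤ ⌊x⌋₊ := by exact_mod_cast (Nat.one_le_floor_iff x).mpr hx
  rw [← Gamma_nat_eq_factorial]
  exact Gamma_strictMonoOn_Ici.monotoneOn (Set.mem_Ici.mpr (by linarith))
    (Set.mem_Ici.mpr (by linarith)) (by gcongr; exact Nat.floor_le (by linarith))

lemma Gamma_add_one_le_factorial_ceil {x : ℝ} (hx : 1 ≤ x) :
    Gamma (x + 1) ≤ (⌈x⌉₊ ! : ℝ) := by
  have hceil : x ≤ ⌈x⌉₊ := Nat.le_ceil x
  rw [← Gamma_nat_eq_factorial]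
  exact Gamma_strictMonoOn_Ici.monotoneOn (Set.mem_Ici.mpr (by linarith))
    (Set.mem_Ici.mpr (by linarith)) (by gcongr)

lemma tendsto_log_Gamma_add_one_div_sub_log :
    Tendsto (fun x => log (Gamma (x + 1)) / x - log x) atTop (𝓝 (-1)) := by
  have hfloor : ∀ᶠ x in atTop, |(⌊x⌋₊ : ℝ) - x| ≤ 1 := by
    filter_upwards [eventually_ge_atTop 0] with x hx
    rw [abs_sub_comm, abs_of_nonneg (sub_nonneg.mpr (Nat.floor_le hx))]
    linarith [Nat.lt_floor_add_one x]
  have hceil : ∀ᶠ x in atTop, |(⌈x⌉₊ : ℝ) - x| ≤ 1 := by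
    filter_upwards [eventually_ge_atTop 0] with x hx
    rw [abs_of_nonneg (sub_nonneg.mpr (Nat.le_ceil x))]
    linarith [Nat.ceil_lt_add_one hx]
  refine tendsto_of_tendsto_of_tendsto_of_le_of_le'
    (tendsto_log_factorial_div_sub_log_of_abs_sub_le hfloor)
    (tendsto_log_factorial_div_sub_log_of_abs_sub_le hceil) ?_ ?_
  all_goals
    filter_upwards [eventually_ge_atTop 1] with x hx
    gcongr ?_ / x - log x
  · exact log_le_log (by positivity) (factorial_floor_le_Gamma_add_one hx)
  · exact log_le_log (Gamma_pos_of_pos (by positivity)) (Gamma_add_one_le_factorial_ceil hx)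

lemma tendsto_Gamma_add_one_rpow_inv_div_self :
    Tendsto (fun x => Gamma (x + 1) ^ x⁻¹ / x) atTop (𝓝 (exp (-1))) := by
  refine ((continuous_exp.tendsto _).comp tendsto_log_Gamma_add_one_div_sub_log).congr' ?_
  filter_upwards [eventually_gt_atTop 0] with x hx
  rw [Function.comp_apply, exp_sub, exp_log hx, rpow_def_of_pos (Gamma_pos_of_pos (by positivity)),
    div_eq_mul_inv (log _)]

lemma unitBallRadius_sq (n : ℕ) :
    unitBallRadius n ^ 2 = Gamma (n / 2 + 1) ^ ((n / 2 : ℝ)⁻¹) / π := by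
  have hΓ : 0 ≤ Gamma (n / 2 + 1) := (Gamma_pos_of_pos (by positivity)).le
  rw [unitBallRadius, div_pow, sq_sqrt pi_pos.le, ← rpow_natCast, ← rpow_mul hΓ]
  congr 2
  push_cast
  field_simp

theorem tendsto_n_div_two_R_sq :
    Tendsto (fun n : ℕ => ((n : ℝ) - 1) / (2 * unitBallRadius n ^ 2))
      atTop (nhds (π * Real.exp 1)) := by
  have hhalf : Tendsto (fun n : ℕ => (n / 2 : ℝ)) atTop atTop :=
    tendsto_natCast_atTop_atTop.atTop_div_const two_pos
  have hpred : Tendsto (fun n : ℕ => ((n : ℝ) - 1) / n) atTop (𝓝 1) :=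
    (tendsto_div_self_of_abs_sub_le (y := (· - 1)) (C := 1) (by simp)).comp
      tendsto_natCast_atTop_atTop
  have := (hpred.const_mul π).mul
    ((tendsto_Gamma_add_one_rpow_inv_div_self.comp hhalf).inv₀ (exp_ne_zero _))
  rw [mul_one, exp_neg, inv_inv] at this
  refine this.congr' ?_
  filter_upwards [eventually_ne_atTop 0] with n hn
  rw [Function.comp_apply, unitBallRadius_sq]
  field_simp
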